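/- arXiv:math/0505198 — 8 statements merged into one kernel-verified Lean document; each statement's English description precedes it below -/
import Mathlib

section
/- Let G be an abelian group and A a finite subset of G. For every integer s ≥ 2, there exists a finite abelian group G' and a subset A' ⊆ G' such that A is Freiman s-isomorphic to A' (i.e., there is a bijection φ : A → A' such that a₁ + ... + a_s = b₁ + ... + b_s holds for elements of A if and only if φ(a₁) + ... + φ(a_s) = φ(b₁) + ... + φ(b_s)). -/
/-!
The subgroup `H` generated by `A` is a finitely generated abelian group, hence residually finite:
by the structure theorem `H ≃ ℤⁿ × T` with `T` finite, and a nonzero element is detected either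
in `T` or by one coordinate reduced modulo a large integer. Residual finiteness yields a
homomorphism from `H` to a finite group that is injective on the finite sumset `s • A`, and a
homomorphism injective on `s • A` is a Freiman `s`-isomorphism from `A` onto its image.
-/

open Set Pointwise

lemma ZMod.intCast_ne_zero_of_natAbs_lt {c : ℤ} {N : ℕ} (hc : c ≠ 0) (hN : c.natAbs < N) :
    (c : ZMod N) ≠ 0 := by
  rw [ne_eq, ZMod.intCast_zmod_eq_zero_iff_dvd]
  intro hdvd
  have := Int.natAbs_le_of_dvd_ne_zero hdvd hc
  simp only [Int.natAbs_natCast] at this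
  omega

instance AddCommGroup.residuallyFinite_of_fg (H : Type*) [AddCommGroup H] [AddGroup.FG H] :
    AddGroup.ResiduallyFinite H := by
  classical
  obtain ⟨n, ι, _, p, hp, e, ⟨φ⟩⟩ := AddCommGroup.equiv_free_prod_directSum_zmod H
  have : ∀ i, NeZero (p i ^ e i) := fun i => ⟨pow_ne_zero _ (hp i).ne_zero⟩
  have : Finite (DirectSum ι fun i => ZMod (p i ^ e i)) :=
    inferInstanceAs (Finite (Π₀ i, ZMod (p i ^ e i)))
  refine AddGroup.residuallyFinite_of_forall_exists_finite_addMonoidHom.{_, 0} fun g hg => ?_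
  by_cases htorsion : (φ g).2 = 0
  · have hfree : (φ g).1 ≠ 0 := fun h => hg (φ.map_eq_zero_iff.1 (Prod.ext h htorsion))
    obtain ⟨i, hi⟩ := Finsupp.ne_iff.1 hfree
    let reduce : H →+ ZMod (((φ g).1 i).natAbs + 1) :=
      (Int.castAddHom _).comp
        ((Finsupp.applyAddHom i).comp ((AddMonoidHom.fst _ _).comp φ.toAddMonoidHom))
    exact ⟨_, inferInstance, inferInstance, reduce,
      ZMod.intCast_ne_zero_of_natAbs_lt hi (Nat.lt_succ_self _)⟩
  · exact ⟨_, inferInstance, inferInstance, (AddMonoidHom.snd _ _).comp φ.toAddMonoidHom,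
      htorsion⟩

lemma AddGroup.exists_finiteIndex_disjoint {H : Type*} [AddGroup H] [AddGroup.ResiduallyFinite H]
    {D : Set H} (hD : D.Finite) (h0 : 0 ∉ D) :
    ∃ K : AddSubgroup H, K.FiniteIndex ∧ Disjoint (K : Set H) D := by
  have hsep : ∀ d : D, ∃ K : AddSubgroup H, K.FiniteIndex ∧ (d : H) ∉ K := fun d =>
    AddGroup.residuallyFinite_iff_exists_finiteIndex.1 ‹_› (d : H) (ne_of_mem_of_not_mem d.2 h0)
  choose K hK hdK using hsep
  have := hD.to_subtype
  refine ⟨⨅ d, K d, AddSubgroup.finiteIndex_iInf hK, Set.disjoint_left.2 fun x hxK hxD => ?_⟩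
  exact hdK ⟨x, hxD⟩ (AddSubgroup.mem_iInf.1 hxK _)

lemma AddGroup.exists_finite_addMonoidHom_injOn {H : Type*} [AddCommGroup H]
    [AddGroup.ResiduallyFinite H] {S : Set H} (hS : S.Finite) :
    ∃ (Q : Type) (_ : AddCommGroup Q) (_ : Finite Q) (f : H →+ Q), InjOn f S := by
  obtain ⟨K, hK, hdisj⟩ :=
    exists_finiteIndex_disjoint ((hS.sub hS).sdiff (t := {0})) (fun h => h.2 rfl)
  refine ⟨Shrink.{0} (H ⧸ K), inferInstance, inferInstance,
    (Shrink.addEquiv.symm : H ⧸ K ≃+ _).toAddMonoidHom.comp (QuotientAddGroup.mk' K),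
    fun x hx y hy hxy => ?_⟩
  have hxyK : x - y ∈ K := QuotientAddGroup.eq_iff_sub_mem.1 (by simpa using hxy)
  by_contra hne
  exact Set.disjoint_left.1 hdisj hxyK ⟨sub_mem_sub hx hy, sub_ne_zero.2 hne⟩

lemma Set.Finite.nsmul {α : Type*} [AddMonoid α] {B : Set α} (hB : B.Finite) (n : ℕ) :
    (n • B).Finite := by
  induction n with
  | zero => simp
  | succ n ih => simpa only [succ_nsmul] using ih.add hB

lemma Set.multiset_sum_mem_nsmul {α : Type*} [AddCommMonoid α] {B : Set α} {u : Multiset α}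
    (hu : ∀ x ∈ u, x ∈ B) : u.sum ∈ Multiset.card u • B := by
  simpa [Multiset.map_const', Multiset.sum_replicate] using
    Set.multiset_sum_mem_multiset_sum u (fun _ => B) id hu

lemma isAddFreimanIso_image_of_injOn_nsmul {α β : Type*} [AddCancelCommMonoid α]
    [AddCommMonoid β] (f : α →+ β) {n : ℕ} (hn : n ≠ 0) {B : Set α} (hf : InjOn f (n • B)) :
    IsAddFreimanIso n B (f '' B) f where
  bijOn := by
    refine ⟨mapsTo_image f B, fun x hx y hy hxy => ?_, surjOn_image f B⟩
    obtain ⟨m, rfl⟩ := Nat.exists_eq_succ_of_ne_zero hn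
    have hxmem : x + m • x ∈ (m + 1) • B := by
      rw [succ_nsmul']; exact add_mem_add hx (nsmul_mem_nsmul hx)
    have hymem : y + m • x ∈ (m + 1) • B := by
      rw [succ_nsmul']; exact add_mem_add hy (nsmul_mem_nsmul hx)
    exact add_right_cancel (hf hxmem hymem (by simp [hxy]))
  map_sum_eq_map_sum u v hu hv hcu hcv := by
    rw [← map_multiset_sum, ← map_multiset_sum]
    refine ⟨fun h => hf ?_ ?_ h, congrArg f⟩
    · exact hcu ▸ Set.multiset_sum_mem_nsmul hu
    · exact hcv ▸ Set.multiset_sum_mem_nsmul hv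

/-- **Finite sets have finite models.** Every finite subset `A` of an abelian group is
Freiman `s`-isomorphic to a subset of some finite abelian group, for any `s ≥ 2`. -/
theorem finite_sets_have_finite_models {G : Type*} [AddCommGroup G] (A : Finset G)
    (s : ℕ) (hs : 2 ≤ s) :
    ∃ (G' : Type) (_ : AddCommGroup G') (_ : Fintype G') (A' : Set G') (φ : G → G'),
      IsAddFreimanIso s (A : Set G) A' φ := by
  have hs0 : s ≠ 0 := by omega
  let H := AddSubgroup.closure (A : Set G)
  have : AddGroup.FG H := AddGroup.closure_finset_fg A
  let A₀ : Set H := Subtype.val ⁻¹' A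
  have hA₀ : A₀.Finite := A.finite_toSet.preimage Subtype.val_injective.injOn
  have hA : IsAddFreimanIso s A₀ A H.subtype := by
    have himage : H.subtype '' A₀ = A :=
      (Subtype.image_preimage_coe _ _).trans (inter_eq_right.2 AddSubgroup.subset_closure)
    rw [← himage]
    exact isAddFreimanIso_image_of_injOn_nsmul H.subtype hs0 H.subtype_injective.injOn
  obtain ⟨Q, _, _, f, hf⟩ := AddGroup.exists_finite_addMonoidHom_injOn (hA₀.nsmul s)
  exact ⟨Q, inferInstance, Fintype.ofFinite Q, f '' A₀, f ∘ Function.invFunOn H.subtype A₀,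
    (isAddFreimanIso_image_of_injOn_nsmul f hs0 hf).comp hA.invFunOn⟩
end

section
/- Let G be an abelian group, A ⊆ G a finite set, q ≥ 2 an integer, and ψ : G → ℤ/qℤ a group homomorphism. Suppose there exist b ∈ ℤ/qℤ and an integer l with l < q/3 such that the number of elements of A - A not lying in ψ⁻¹ of the interval [b, b+l] is strictly less than |A|/2. Then there exists x ∈ ℤ/qℤ such that ψ(A) ⊆ [x, x+l]. -/
/-!
By pigeonhole, any two elements `a, a'` of `A` are joined by some `w ∈ A` with `ψ(a - w)` and
`ψ(w - a')` both in `J = [b, b+l]`. Hence `ψ(A) - ψ(A) ⊆ J + J`, so all of `ψ(A)` sits at integer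
positions in `[0, 2l]` above a fixed base point, and a step `ψ a - ψ w ∈ J` changes the position
by an amount lying in one of two lifts of `J` to `ℤ`, which are `q > 3l` apart. Going from the top
position down to the bottom one and back up in two steps each is then impossible unless the
positions span at most `l`.
-/

open scoped Pointwise
open Finset

theorem Finset.exists_mem_sub_notMem_and_sub_notMem_of_two_mul_card_lt {G : Type*} [AddGroup G]
    [DecidableEq G] {A B : Finset G} (h : 2 * B.card < A.card) (a a' : G) :
    ∃ w ∈ A, a - w ∉ B ∧ w - a' ∉ B := by
  have h₁ : (A.filter (a - · ∈ B)).card ≤ B.card :=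
    card_le_card_of_injOn (a - ·) (fun w hw => (mem_filter.mp hw).2)
      (fun _ _ _ _ hxy => sub_right_injective hxy)
  have h₂ : (A.filter (· - a' ∈ B)).card ≤ B.card :=
    card_le_card_of_injOn (· - a') (fun w hw => (mem_filter.mp hw).2)
      (fun _ _ _ _ hxy => sub_left_injective hxy)
  have hA : ¬ A ⊆ A.filter (a - · ∈ B) ∪ A.filter (· - a' ∈ B) := fun hs => by
    have := (card_le_card hs).trans (card_union_le _ _)
    omega
  obtain ⟨w, hwA, hw⟩ := not_subset.mp hA
  simp only [mem_union, mem_filter, not_or, not_and] at hw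
  exact ⟨w, hwA, hw.1 hwA, hw.2 hwA⟩

namespace ZMod

variable {q : ℕ}

def arc (b : ZMod q) (l : ℕ) : Set (ZMod q) := {x | ∃ i ≤ l, x = b + i}

theorem val_add_val_neg_eq_or [NeZero q] {x y b : ZMod q} {i : ℕ} (hi : y.val + i < q)
    (h : x - y = b + i) :
    x.val + (-b).val = y.val + i ∨ x.val + (-b).val = y.val + i + q := by
  have hval : (x + -b).val = y.val + i := by
    have hxb : x + -b = ((y.val + i : ℕ) : ZMod q) := by
      push_cast [natCast_zmod_val]
      linear_combination h
    rw [hxb, val_natCast_of_lt hi]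
  rcases lt_or_ge (x.val + (-b).val) q with hlt | hge
  · exact .inl (hval ▸ (val_add_of_lt hlt).symm)
  · exact .inr (hval ▸ val_add_val_of_le hge)

theorem exists_forall_mem_arc {l : ℕ} (hl : 3 * l < q) {b : ZMod q} {P : Finset (ZMod q)}
    (hP : ∀ p ∈ P, ∀ p' ∈ P, ∃ r ∈ P, p - r ∈ arc b l ∧ r - p' ∈ arc b l) :
    ∃ x, ∀ p ∈ P, p ∈ arc x l := by
  have : NeZero q := ⟨by omega⟩
  rcases P.eq_empty_or_nonempty with rfl | ⟨p₀, hp₀⟩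
  · simp
  set c := p₀ + (b + b)
  set F : ZMod q → ℕ := fun p => (p - c).val
  have hF : ∀ p ∈ P, F p ≤ 2 * l := fun p hp => by
    obtain ⟨_, _, ⟨i, hi, h₁⟩, ⟨j, hj, h₂⟩⟩ := hP p hp p₀ hp₀
    have hpc : p - c = ((i + j : ℕ) : ZMod q) := by push_cast; linear_combination h₁ + h₂
    simp only [F, hpc, val_natCast_of_lt (show i + j < q by omega)]
    omega
  have hstep : ∀ p r, r ∈ P → ∀ i ≤ l, p - r = b + i →
      F p + (-b).val = F r + i ∨ F p + (-b).val = F r + i + q := fun p r hr i hi h => by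
    have := hF r hr
    exact val_add_val_neg_eq_or (by simp only [F] at this; omega) (by linear_combination h)
  obtain ⟨pM, hpM, hmax⟩ := P.exists_max_image F ⟨p₀, hp₀⟩
  obtain ⟨pm, hpm, hmin⟩ := P.exists_min_image F ⟨p₀, hp₀⟩
  by_cases hspread : F pM ≤ F pm + l
  · refine ⟨c + F pm, fun p hp => ⟨F p - F pm, by grind, ?_⟩⟩
    rw [Nat.cast_sub (hmin p hp), natCast_zmod_val, natCast_zmod_val]
    ring
  -- Walk `pM → w → pm → v → pM`; each step is one of the two lifts of `[b, b + l]`.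
  obtain ⟨w, hw, ⟨i₁, hi₁, h₁⟩, ⟨i₂, hi₂, h₂⟩⟩ := hP pM hpM pm hpm
  obtain ⟨v, hv, ⟨i₃, hi₃, h₃⟩, ⟨i₄, hi₄, h₄⟩⟩ := hP pm hpm pM hpM
  have := hstep _ _ hw _ hi₁ h₁
  have := hstep _ _ hpm _ hi₂ h₂
  have := hstep _ _ hv _ hi₃ h₃
  have := hstep _ _ hpM _ hi₄ h₄
  have := hmax w hw; have := hmin w hw; have := hmax v hv; have := hmin v hv
  have := hF pM hpM; have := val_lt (-b)
  omega

end ZMod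

open Classical in
theorem stmt1_general {G : Type*} [AddCommGroup G] [DecidableEq G] (A : Finset G)
    (q : ℕ) (ψ : G →+ ZMod q) (b : ZMod q) (l : ℕ) (hl : 3 * l < q)
    (h : 2 * ((A - A).filter
        (fun d => ∀ i ∈ Finset.range (l + 1), ψ d ≠ b + (i : ZMod q))).card < A.card) :
    ∃ x : ZMod q, ∀ a ∈ A, ∃ i ∈ Finset.range (l + 1), ψ a = x + (i : ZMod q) := by
  have hgood : ∀ a ∈ A, ∀ a' ∈ A, a - a' ∉ (A - A).filter
      (fun d => ∀ i ∈ Finset.range (l + 1), ψ d ≠ b + (i : ZMod q)) →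
      ψ a - ψ a' ∈ ZMod.arc b l := fun a ha a' ha' hd => by
    simpa [ZMod.arc, sub_mem_sub ha ha', Nat.lt_succ_iff] using hd
  have hP : ∀ p ∈ A.image ψ, ∀ p' ∈ A.image ψ,
      ∃ r ∈ A.image ψ, p - r ∈ ZMod.arc b l ∧ r - p' ∈ ZMod.arc b l := by
    simp only [forall_mem_image]
    intro a ha a' ha'
    obtain ⟨w, hw, hw₁, hw₂⟩ :=
      exists_mem_sub_notMem_and_sub_notMem_of_two_mul_card_lt h a a'
    exact ⟨ψ w, mem_image_of_mem ψ hw, hgood a ha w hw hw₁, hgood w hw a' ha' hw₂⟩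
  obtain ⟨x, hx⟩ := ZMod.exists_forall_mem_arc hl hP
  refine ⟨x, fun a ha => ?_⟩
  obtain ⟨i, hi, hψ⟩ := hx (ψ a) (mem_image_of_mem ψ ha)
  exact ⟨i, mem_range_succ_iff.mpr hi, hψ⟩

open Classical in
/-- If few elements of `A - A` fall outside `ψ⁻¹[b, b+l]` (fewer than `|A|/2`),
with `l < q/3`, then `ψ(A)` is contained in an interval `[x, x+l]` of `ℤ/qℤ`. -/
theorem stmt1 {G : Type*} [AddCommGroup G] [DecidableEq G] (A : Finset G)
    (q : ℕ) (hq : 2 ≤ q) (ψ : G →+ ZMod q) (b : ZMod q) (l : ℕ) (hl : 3 * l < q)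
    (h : 2 * ((A - A).filter
        (fun d => ∀ i ∈ Finset.range (l + 1), ψ d ≠ b + (i : ZMod q))).card < A.card) :
    ∃ x : ZMod q, ∀ a ∈ A, ∃ i ∈ Finset.range (l + 1), ψ a = x + (i : ZMod q) :=
  stmt1_general A q ψ b l hl h
end

section
/- Let G be a finite abelian group, S ⊆ G, and let κ ∈ (0,1) and δ ∈ (0,1/2). Suppose γ is a nontrivial character of G of order q such that |Ŝ(γ)| ≥ (1 - 4κδ²)·|S|/|G|, where Ŝ(γ) = |G|⁻¹ Σ_{x∈G} 1_S(x)γ(x). Let ψ : G → ℤ/qℤ be the homomorphism obtained by composing γ with the map sending e^{2πij/q} to j mod q. Then there exist b ∈ ℤ/qℤ and an integer l with l < δq such that the number of elements of S whose image under ψ lies outside the interval [b, b+l] is at most κ|S|. -/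
/-! Rotating `z = ∑_{x ∈ S} γ x` by its argument `φ` gives `∑_{x ∈ S} cos (2πψ(x)/q - φ) = ‖z‖`,
which is at least `(1 - 4κδ²)|S|`; by Markov's inequality at most `κ|S|` elements of `S` have
`cos (2πψ(x)/q - φ) ≤ 1 - 4δ²`. For every other `x`, since `cos (πδ) ≤ 1 - 4δ²` when `δ ≤ 1/2`,
the angle `2πψ(x)/q` lies within `πδ` of `φ` modulo `2π`, so `ψ(x)` lies in a run of fewer than
`δq` consecutive residues that depends only on `φ`. -/

open Real Finset

lemma Real.sqrt_two_mul_le_sin_pi_mul_div_two {δ : ℝ} (h0 : 0 ≤ δ) (h1 : δ ≤ 1 / 2) :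
    √2 * δ ≤ sin (π * δ / 2) := by
  have hπ := pi_pos
  have := strictConcaveOn_sin_Icc.concaveOn.2 (⟨le_rfl, hπ.le⟩ : (0 : ℝ) ∈ Set.Icc 0 π)
    (⟨by positivity, by linarith⟩ : π / 4 ∈ Set.Icc 0 π) (by linarith : 0 ≤ 1 - 2 * δ)
    (by linarith : 0 ≤ 2 * δ) (by ring)
  simp only [smul_eq_mul, sin_zero, mul_zero, zero_add, sin_pi_div_four] at this
  calc √2 * δ = 2 * δ * (√2 / 2) := by ring
    _ ≤ sin (2 * δ * (π / 4)) := this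
    _ = sin (π * δ / 2) := by ring_nf

lemma Real.cos_pi_mul_le {δ : ℝ} (h0 : 0 ≤ δ) (h1 : δ ≤ 1 / 2) :
    cos (π * δ) ≤ 1 - 4 * δ ^ 2 := by
  have hsin := sqrt_two_mul_le_sin_pi_mul_div_two h0 h1
  have hsq : (√2 * δ) ^ 2 = 2 * δ ^ 2 := by rw [mul_pow, sq_sqrt zero_le_two]
  have : cos (π * δ) = 1 - 2 * sin (π * δ / 2) ^ 2 := by
    rw [← cos_two_mul_eq_one_sub]; ring_nf
  nlinarith [mul_nonneg (sqrt_nonneg 2) h0]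

lemma Real.exists_abs_sub_int_mul_two_pi_lt_of_one_sub_lt_cos {θ δ : ℝ} (h0 : 0 ≤ δ)
    (h1 : δ ≤ 1 / 2) (h : 1 - 4 * δ ^ 2 < cos θ) : ∃ k : ℤ, |θ - k * (2 * π)| < π * δ := by
  have hπ := pi_pos
  refine ⟨round (θ / (2 * π)), ?_⟩
  set s := θ - round (θ / (2 * π)) * (2 * π)
  have hs : |s| ≤ π := by
    have := abs_sub_round (θ / (2 * π))
    calc |s| = |2 * π * (θ / (2 * π) - round (θ / (2 * π)))| := by
          rw [mul_sub, mul_div_cancel₀ _ (by positivity), mul_comm (2 * π)]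
      _ = 2 * π * |θ / (2 * π) - round (θ / (2 * π))| := by
          rw [abs_mul, abs_of_pos (by positivity)]
      _ ≤ π := by nlinarith
  by_contra! hle
  have : cos θ ≤ cos (π * δ) := by
    rw [← cos_sub_int_mul_two_pi θ (round (θ / (2 * π))), ← cos_abs]
    exact cos_le_cos_of_nonneg_of_le_pi (by positivity) hs hle
  linarith [cos_pi_mul_le h0 h1]

lemma Finset.card_filter_le_sub_mul_le_sum_sub {ι : Type*} (s : Finset ι) (f : ι → ℝ)
    (t : ℝ) (hf : ∀ x ∈ s, f x ≤ 1) :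
    #{x ∈ s | f x ≤ 1 - t} * t ≤ ∑ x ∈ s, (1 - f x) := by
  calc #{x ∈ s | f x ≤ 1 - t} * t ≤ ∑ x ∈ s with f x ≤ 1 - t, (1 - f x) := by
        rw [← nsmul_eq_mul]
        exact card_nsmul_le_sum _ _ _ fun x hx => by linarith [(mem_filter.1 hx).2]
    _ ≤ ∑ x ∈ s, (1 - f x) :=
        sum_le_sum_of_subset_of_nonneg (filter_subset _ _) fun x hx _ => by linarith [hf x hx]

namespace Complex

lemma sum_cos_sub_arg_eq_norm {ι : Type*} (s : Finset ι) (θ : ι → ℝ) :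
    ∑ x ∈ s, Real.cos (θ x - arg (∑ x ∈ s, exp (θ x * I))) = ‖∑ x ∈ s, exp (θ x * I)‖ := by
  set z := ∑ x ∈ s, exp (θ x * I)
  have hz : z * exp (-(arg z * I)) = ‖z‖ := by
    nth_rewrite 1 [← norm_mul_exp_arg_mul_I z]
    rw [mul_assoc, ← exp_add, add_neg_cancel, exp_zero, mul_one]
  calc ∑ x ∈ s, Real.cos (θ x - z.arg)
      = (∑ x ∈ s, exp (θ x * I) * exp (-(arg z * I))).re := by
        rw [re_sum]
        refine sum_congr rfl fun x _ => ?_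
        rw [← exp_add, ← exp_ofReal_mul_I_re (θ x - arg z)]
        push_cast; ring_nf
    _ = ‖z‖ := by rw [← sum_mul, hz, ofReal_re]

end Complex

lemma Int.exists_lt_ceil_eq_floor_add_one_add {a w : ℝ} {m : ℤ} (ha : a < m) (hw : m < a + w) :
    ∃ i : ℕ, i < ⌈w⌉₊ ∧ m = ⌊a⌋ + 1 + i := by
  have hfl : ⌊a⌋ < m := Int.floor_lt.2 ha
  refine ⟨(m - ⌊a⌋ - 1).toNat, Nat.lt_ceil.2 ?_, by omega⟩
  have : (((m - ⌊a⌋ - 1).toNat : ℤ) : ℝ) = m - ⌊a⌋ - 1 := by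
    rw [Int.toNat_of_nonneg (by omega)]; push_cast; ring
  rw [← Int.cast_natCast, this]
  linarith [Int.lt_floor_add_one a]

lemma ZMod.exists_lt_ceil_eq_add_of_one_sub_lt_cos {q : ℕ} [NeZero q] (j : ZMod q) {φ δ : ℝ}
    (h0 : 0 ≤ δ) (h1 : δ ≤ 1 / 2) (h : 1 - 4 * δ ^ 2 < cos (2 * π * j.val / q - φ)) :
    ∃ i : ℕ, i < ⌈δ * q⌉₊ ∧ j = ((⌊q * φ / (2 * π) - δ * q / 2⌋ + 1 : ℤ) : ZMod q) + i := by
  have hπ := pi_pos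
  have hq : (0 : ℝ) < q := by exact_mod_cast Nat.pos_of_ne_zero (NeZero.ne q)
  obtain ⟨k, hk⟩ := Real.exists_abs_sub_int_mul_two_pi_lt_of_one_sub_lt_cos h0 h1 h
  set m : ℤ := j.val - k * q
  have hm : |(m : ℝ) - q * φ / (2 * π)| < δ * q / 2 := by
    calc |(m : ℝ) - q * φ / (2 * π)|
        = q / (2 * π) * |2 * π * j.val / q - φ - k * (2 * π)| := by
          rw [← abs_of_pos (by positivity : 0 < q / (2 * π)), ← abs_mul]
          congr 1; simp only [m]; push_cast; field_simp; ring
      _ < q / (2 * π) * (π * δ) := by gcongr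
      _ = δ * q / 2 := by field_simp
  obtain ⟨i, hi, him⟩ := Int.exists_lt_ceil_eq_floor_add_one_add
    (a := q * φ / (2 * π) - δ * q / 2) (w := δ * q) (m := m)
    (by linarith [(abs_lt.1 hm).1]) (by linarith [(abs_lt.1 hm).2])
  refine ⟨i, hi, ?_⟩
  have hmj : (m : ZMod q) = j := by simp [m]
  rw [← hmj, him]
  push_cast
  ring

open Classical in
theorem stmt2_general {G : Type*} [AddCommGroup G] [Fintype G] (S : Finset G)
    (κ δ : ℝ) (hδ0 : 0 < δ) (hδ1 : δ < 1 / 2)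
    (γ : AddChar G ℂ) (hγ : γ ≠ 1) (q : ℕ)
    (ψ : G →+ ZMod q)
    (hψ : ∀ x : G, γ x = Complex.exp (2 * Real.pi * Complex.I * ((ψ x).val : ℂ) / (q : ℂ)))
    (hhat : (1 - 4 * κ * δ ^ 2) * ((S.card : ℝ) / Fintype.card G) ≤
      ‖(Fintype.card G : ℂ)⁻¹ * ∑ x ∈ S, γ x‖) :
    ∃ (b : ZMod q) (l : ℕ), (l : ℝ) < δ * q ∧
      ((S.filter
        (fun s => ∀ i ∈ Finset.range (l + 1), ψ s ≠ b + (i : ZMod q))).card : ℝ) ≤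
        κ * S.card := by
  have hq0 : q ≠ 0 := by
    rintro rfl
    exact hγ (AddChar.ext _ _ fun x => by simp [hψ x])
  have := NeZero.mk hq0
  set θ : G → ℝ := fun x => 2 * π * (ψ x).val / q
  have hγθ : ∀ x, γ x = Complex.exp (θ x * Complex.I) := fun x => by
    rw [hψ x]; congr 1; push_cast [θ]; ring
  simp only [hγθ] at hhat
  set z := ∑ x ∈ S, Complex.exp (θ x * Complex.I)
  have hz : (1 - 4 * κ * δ ^ 2) * #S ≤ ‖z‖ := by
    rw [norm_mul, norm_inv, Complex.norm_natCast, ← div_eq_inv_mul, mul_div_assoc',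
      div_le_div_iff_of_pos_right (by exact_mod_cast Fintype.card_pos)] at hhat
    exact hhat
  have hbad : (#{x ∈ S | cos (θ x - z.arg) ≤ 1 - 4 * δ ^ 2} : ℝ) ≤ κ * #S := by
    have hmarkov := card_filter_le_sub_mul_le_sum_sub S (fun x => cos (θ x - z.arg)) (4 * δ ^ 2)
      fun x _ => cos_le_one _
    rw [sum_sub_distrib, Complex.sum_cos_sub_arg_eq_norm] at hmarkov
    simp only [sum_const, nsmul_eq_mul, mul_one] at hmarkov
    refine le_of_mul_le_mul_right ?_ (by positivity : 0 < 4 * δ ^ 2)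
    calc _ ≤ #S - ‖z‖ := hmarkov
      _ ≤ κ * #S * (4 * δ ^ 2) := by linarith
  refine ⟨((⌊q * z.arg / (2 * π) - δ * q / 2⌋ + 1 : ℤ) : ZMod q), ⌈δ * q⌉₊ - 1,
    Nat.lt_ceil.1 (Nat.sub_one_lt (Nat.ceil_pos.2 (by positivity)).ne'), le_trans ?_ hbad⟩
  gcongr with x
  refine fun hxb => not_lt.1 fun hcos => ?_
  obtain ⟨i, hi, hψx⟩ := ZMod.exists_lt_ceil_eq_add_of_one_sub_lt_cos (ψ x) hδ0.le hδ1.le hcos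
  exact hxb i (mem_range.2 (by omega)) hψx

open Classical in
/-- If a nontrivial character `γ` of order `q` gives `|Ŝ(γ)| ≥ (1 - 4κδ²)|S|/|G|`, then
most of `S` (all but at most `κ|S|` elements) maps under the induced homomorphism
`ψ : G → ℤ/qℤ` into an interval `[b, b+l]` with `l < δq`. -/
theorem stmt2 {G : Type*} [AddCommGroup G] [Fintype G] (S : Finset G)
    (κ δ : ℝ) (hκ0 : 0 < κ) (hκ1 : κ < 1) (hδ0 : 0 < δ) (hδ1 : δ < 1 / 2)
    (γ : AddChar G ℂ) (hγ : γ ≠ 1) (q : ℕ) (hq : orderOf γ = q)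
    (ψ : G →+ ZMod q)
    (hψ : ∀ x : G, γ x = Complex.exp (2 * Real.pi * Complex.I * ((ψ x).val : ℂ) / (q : ℂ)))
    (hhat : (1 - 4 * κ * δ ^ 2) * ((S.card : ℝ) / Fintype.card G) ≤
      ‖(Fintype.card G : ℂ)⁻¹ * ∑ x ∈ S, γ x‖) :
    ∃ (b : ZMod q) (l : ℕ), (l : ℝ) < δ * q ∧
      ((S.filter
        (fun s => ∀ i ∈ Finset.range (l + 1), ψ s ≠ b + (i : ZMod q))).card : ℝ) ≤
        κ * S.card :=
  stmt2_general S κ δ hδ0 hδ1 γ hγ q ψ hψ hhat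
end

section
/- Let G be a finite abelian group, Φ = {φ₁, ..., φ_d} a dissociated set of characters of G, and f(x) = Σ_{j=1}^d c_j Re(ω_j φ_j(x)) with c_j ∈ ℝ and |ω_j| = 1. Then for every real t, 𝔼_{x∈G} e^{t f(x)} ≤ e^{t² 𝔼 f²}, where 𝔼 f² = 𝔼_{x∈G} f(x)². -/
/-!
Write `a_j(x) = Re(ω_j φ_j(x))`. Since `Re w = (w + w̄)/2` and `w̄ = w⁻¹` on the unit circle, a
product `∏_{j∈T} a_j` with `T ≠ ∅` is a combination of characters `∏_{j∈T} φ_j^{±1}`, all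
nontrivial by dissociativity, so it has mean zero. By convexity of `exp`, whenever `|a_j| ≤ m_j`,
`e^{u a_j} ≤ cosh(u m_j) + a_j sinh(u m_j)/m_j`; multiplying these bounds and averaging, only the
constant term of the expanded product survives, so `𝔼 e^{tf} ≤ ∏ cosh(t c_j m_j) ≤
exp(t² Σ c_j² m_j² / 2)`. One may take `m_j² = 2𝔼 a_j²`: either `φ_j² ≠ 1` and `𝔼 a_j² = 1/2`,
or `φ_j² = 1` and `a_j²` is constant. Orthogonality of the `a_j` then gives `Σ c_j² 𝔼 a_j² = 𝔼 f²`.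
-/

open Finset Real

def IsDissociated {M ι : Type*} [CommGroup M] [Fintype ι] (g : ι → M) : Prop :=
  ∀ ε : ι → ℤ, (∀ j, ε j = -1 ∨ ε j = 0 ∨ ε j = 1) → (∏ j, g j ^ ε j) = 1 → ∀ j, ε j = 0

lemma IsDissociated.prod_mul_prod_inv_ne_one {M ι : Type*} [CommGroup M] [Fintype ι]
    [DecidableEq ι] {g : ι → M} (hg : IsDissociated g) {S T : Finset ι} (hST : S ⊆ T)
    (hT : T.Nonempty) :
    (∏ j ∈ S, g j) * (∏ j ∈ T \ S, g j)⁻¹ ≠ 1 := by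
  intro h
  set ε : ι → ℤ := fun j => if j ∈ S then 1 else if j ∈ T then -1 else 0
  have hprod : ∏ j, g j ^ ε j = (∏ j ∈ S, g j) * (∏ j ∈ T \ S, g j)⁻¹ := by
    have houtside : ∀ j ∉ T, g j ^ ε j = 1 := fun j hj => by
      simp [ε, hj, show j ∉ S from fun h => hj (hST h)]
    rw [← prod_subset (subset_univ T) fun j _ => houtside j, ← prod_sdiff hST, mul_comm,
      ← prod_inv_distrib]
    congr 1
    · exact prod_congr rfl fun j hj => by simp [ε, hj]
    · exact prod_congr rfl fun j hj => by simp [ε, (mem_sdiff.1 hj).1, (mem_sdiff.1 hj).2]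
  obtain ⟨j, hj⟩ := hT
  have := hg ε (fun j => by simp only [ε]; split_ifs <;> simp) (hprod.trans h) j
  by_cases hjS : j ∈ S <;> simp [ε, hjS, hj] at this

lemma Real.exp_mul_le_cosh_add_mul_sinh_div {v m y : ℝ} (hy : |y| ≤ m) :
    exp (v * y) ≤ cosh (v * m) + y * (sinh (v * m) / m) := by
  rcases ((abs_nonneg y).trans hy).eq_or_lt with rfl | hm
  · simp [abs_nonpos_iff.1 hy]
  obtain ⟨hy₁, hy₂⟩ := abs_le.1 hy
  have hconv := convexOn_exp.2 (Set.mem_univ (-(v * m))) (Set.mem_univ (v * m))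
    (div_nonneg (sub_nonneg.2 hy₂) (by positivity) : 0 ≤ (m - y) / (2 * m))
    (div_nonneg (by linarith) (by positivity) : 0 ≤ (m + y) / (2 * m))
    (by field_simp; ring)
  have hvy : (m - y) / (2 * m) * (-(v * m)) + (m + y) / (2 * m) * (v * m) = v * y := by
    field_simp; ring
  simp only [smul_eq_mul, hvy] at hconv
  rw [cosh_eq, sinh_eq]
  calc exp (v * y) ≤ _ := hconv
    _ = _ := by field_simp; ring

section RieszProduct

variable {α ι : Type*} [Fintype α] [Fintype ι] {a : ι → α → ℝ}

lemma sum_prod_add_mul_eq_card_mul_prod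
    (ha : ∀ T : Finset ι, T.Nonempty → ∑ x, ∏ j ∈ T, a j x = 0) (b s : ι → ℝ) :
    ∑ x, ∏ j, (b j + a j x * s j) = Fintype.card α * ∏ j, b j := by
  classical
  simp_rw [add_comm (b _), Fintype.prod_add, prod_mul_distrib]
  rw [sum_comm, Fintype.sum_eq_single ∅]
  · simp
  · intro T hT
    simp_rw [mul_assoc, ← sum_mul, ha T (nonempty_iff_ne_empty.2 hT), zero_mul]

lemma sum_sq_sum_mul_eq (ha : Pairwise fun j k => ∑ x, a j x * a k x = 0) (c : ι → ℝ) :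
    ∑ x, (∑ j, c j * a j x) ^ 2 = ∑ j, c j ^ 2 * ∑ x, a j x ^ 2 := by
  simp_rw [sq, sum_mul_sum]
  rw [sum_comm]
  refine sum_congr rfl fun j _ => ?_
  rw [sum_comm, Fintype.sum_eq_single j, mul_sum]
  · exact sum_congr rfl fun x _ => by ring
  · intro k hkj
    rw [← mul_zero (c j * c k), ← ha hkj.symm, mul_sum]
    exact sum_congr rfl fun x _ => by ring

lemma inv_card_mul_sum_exp_le_of_sum_prod_eq_zero [Nonempty α]
    (ha : ∀ T : Finset ι, T.Nonempty → ∑ x, ∏ j ∈ T, a j x = 0)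
    (hbound : ∀ j x, a j x ^ 2 ≤ 2 * ((Fintype.card α : ℝ)⁻¹ * ∑ y, a j y ^ 2))
    (c : ι → ℝ) (f : α → ℝ) (hf : ∀ x, f x = ∑ j, c j * a j x) (t : ℝ) :
    (Fintype.card α : ℝ)⁻¹ * ∑ x, exp (t * f x) ≤
      exp (t ^ 2 * ((Fintype.card α : ℝ)⁻¹ * ∑ x, f x ^ 2)) := by
  classical
  set N : ℝ := (Fintype.card α : ℝ)
  set E : ι → ℝ := fun j => N⁻¹ * ∑ y, a j y ^ 2
  set m : ι → ℝ := fun j => √(2 * E j)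
  have hm : ∀ j, m j ^ 2 = 2 * E j := fun j => sq_sqrt (by positivity)
  have horth : Pairwise fun j k => ∑ x, a j x * a k x = 0 := fun j k hjk => by
    simpa [prod_pair hjk] using ha {j, k} (insert_nonempty j {k})
  have hpoint : ∀ x, exp (t * f x) ≤
      ∏ j, (cosh (t * c j * m j) + a j x * (sinh (t * c j * m j) / m j)) := by
    intro x
    rw [hf, mul_sum, exp_sum]
    refine prod_le_prod (fun j _ => (exp_pos _).le) fun j _ => ?_
    rw [← mul_assoc]
    exact exp_mul_le_cosh_add_mul_sinh_div (abs_le_sqrt (hbound j x))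
  calc N⁻¹ * ∑ x, exp (t * f x)
      ≤ N⁻¹ * ∑ x, ∏ j, (cosh (t * c j * m j) + a j x * (sinh (t * c j * m j) / m j)) := by
        gcongr with x; exact hpoint x
    _ = ∏ j, cosh (t * c j * m j) := by
        rw [sum_prod_add_mul_eq_card_mul_prod ha, inv_mul_cancel_left₀ (by positivity)]
    _ ≤ ∏ j, exp ((t * c j * m j) ^ 2 / 2) :=
        prod_le_prod (fun j _ => (cosh_pos _).le) fun j _ => cosh_le_exp_half_sq _
    _ = exp (t ^ 2 * (N⁻¹ * ∑ x, f x ^ 2)) := by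
        simp_rw [← exp_sum, hf, sum_sq_sum_mul_eq horth]
        rw [mul_sum, mul_sum]
        congr 1
        refine sum_congr rfl fun j _ => ?_
        rw [mul_pow, hm]
        ring

end RieszProduct

section Characters

variable {G : Type*} [AddCommGroup G] [Fintype G]

lemma AddChar.re_mul_apply_eq (ψ : AddChar G ℂ) {z : ℂ} (hz : ‖z‖ = 1) (x : G) :
    ((z * ψ x).re : ℂ) = z / 2 * ψ x + z⁻¹ / 2 * (ψ x)⁻¹ := by
  rw [Complex.re_eq_add_conj, map_mul, ← Complex.inv_eq_conj hz,
    ← Complex.inv_eq_conj (ψ.norm_apply x)]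
  ring

lemma AddChar.sq_re_mul_apply_le (ψ : AddChar G ℂ) {z : ℂ} (hz : ‖z‖ = 1) (x : G) :
    (z * ψ x).re ^ 2 ≤ 2 * ((Fintype.card G : ℝ)⁻¹ * ∑ y, (z * ψ y).re ^ 2) := by
  have hnorm : ∀ y, ‖z * ψ y‖ = 1 := fun y => by simp [hz]
  have hsq : ∀ y, (z * ψ y).re ^ 2 = ((z ^ 2 * (ψ ^ 2) y).re + 1) / 2 := by
    intro y
    have h := Complex.sq_norm (z * ψ y)
    rw [hnorm, one_pow, Complex.normSq_apply] at h
    rw [AddChar.pow_apply, ← mul_pow, sq (z * ψ y), Complex.mul_re (z * ψ y) (z * ψ y)]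
    linarith
  have hN : (Fintype.card G : ℝ) ≠ 0 := Nat.cast_ne_zero.2 Fintype.card_ne_zero
  by_cases hψ : ψ ^ 2 = 1
  · have hconst : ∀ y, (z * ψ y).re ^ 2 = ((z ^ 2).re + 1) / 2 := by
      intro y
      rw [hsq, hψ, AddChar.one_apply, mul_one]
    simp only [hconst, sum_const, card_univ, nsmul_eq_mul, inv_mul_cancel_left₀ hN]
    linarith [hconst x ▸ sq_nonneg (z * ψ x).re]
  · have hsum : ∑ y, (z * ψ y).re ^ 2 = Fintype.card G / 2 := by
      simp_rw [hsq, ← sum_div, sum_add_distrib, ← Complex.re_sum, ← mul_sum,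
        AddChar.sum_eq_zero_of_ne_one hψ]
      simp
    calc (z * ψ x).re ^ 2 ≤ ‖z * ψ x‖ ^ 2 := by
          rw [← sq_abs]; gcongr; exact Complex.abs_re_le_norm _
      _ = 2 * ((Fintype.card G : ℝ)⁻¹ * ∑ y, (z * ψ y).re ^ 2) := by
          rw [hnorm, hsum]; field_simp

lemma IsDissociated.sum_prod_re_eq_zero {ι : Type*} [Fintype ι] {φ : ι → AddChar G ℂ}
    (hφ : IsDissociated φ) {ω : ι → ℂ} (hω : ∀ j, ‖ω j‖ = 1) {T : Finset ι} (hT : T.Nonempty) :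
    ∑ x, ∏ j ∈ T, (ω j * φ j x).re = 0 := by
  classical
  suffices ∑ x, ∏ j ∈ T, ((ω j * φ j x).re : ℂ) = 0 by exact_mod_cast this
  simp_rw [AddChar.re_mul_apply_eq _ (hω _), prod_add]
  rw [sum_comm]
  refine sum_eq_zero fun S hS => ?_
  have hchar : ∀ x, (∏ j ∈ S, ω j / 2 * φ j x) * ∏ j ∈ T \ S, (ω j)⁻¹ / 2 * (φ j x)⁻¹ =
      ((∏ j ∈ S, ω j / 2) * ∏ j ∈ T \ S, (ω j)⁻¹ / 2) *
        ((∏ j ∈ S, φ j) * (∏ j ∈ T \ S, φ j)⁻¹) x := by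
    intro x
    simp only [prod_mul_distrib, AddChar.mul_apply, AddChar.inv_apply', AddChar.prod_apply,
      prod_inv_distrib]
    ring
  simp_rw [hchar, ← mul_sum, AddChar.sum_eq_zero_of_ne_one
    (hφ.prod_mul_prod_inv_ne_one (mem_powerset.1 hS) hT), mul_zero]

end Characters

/-- Bernstein-type inequality: for a dissociated family of characters and
`f(x) = ∑ c_j Re(ω_j φ_j(x))`, one has `𝔼 e^{tf} ≤ e^{t² 𝔼 f²}` for all real `t`. -/
theorem stmt4 {G : Type*} [AddCommGroup G] [Fintype G] (d : ℕ)
    (φ : Fin d → AddChar G ℂ)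
    (hdiss : ∀ ε : Fin d → ℤ, (∀ j, ε j = -1 ∨ ε j = 0 ∨ ε j = 1) →
      (∏ j, φ j ^ ε j) = 1 → ∀ j, ε j = 0)
    (c : Fin d → ℝ) (ω : Fin d → ℂ) (hω : ∀ j, ‖ω j‖ = 1)
    (f : G → ℝ) (hf : ∀ x, f x = ∑ j, c j * (ω j * φ j x).re) (t : ℝ) :
    (Fintype.card G : ℝ)⁻¹ * ∑ x : G, Real.exp (t * f x) ≤
      Real.exp (t ^ 2 * ((Fintype.card G : ℝ)⁻¹ * ∑ x : G, f x ^ 2)) :=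
  inv_card_mul_sum_exp_le_of_sum_prod_eq_zero
    (fun _ => IsDissociated.sum_prod_re_eq_zero hdiss hω)
    (fun j x => (φ j).sq_re_mul_apply_le (hω j) x) c f hf t
end

section
/- Let G be a finite abelian group, let ρ ∈ (0,1], let A ⊆ G with |A| = α|G| where α ∈ (0,1], and let Γ be the set of characters γ of G with |Â(γ)| ≥ ρα, where Â(γ) = |G|⁻¹ Σ_{x∈G} 1_A(x)γ(x). Then every dissociated subset Φ of Γ satisfies |Φ| ≤ 2ρ⁻² log(1/α). -/
/-!
Riesz products. Rotate each character `φ ∈ Φ` by the phase `z φ` of `∑ x ∈ A, φ x` and put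
`p x = ∏ φ ∈ Φ, (cosh ρ + sinh ρ · Re (z φ φ x))`. Pointwise `p ≥ exp (ρ ∑ φ, Re (z φ φ x))`, since
`exp` lies below its chords on `[-ρ, ρ]`; averaging over `A` and using convexity of `exp` gives
`∑ x ∈ A, p x ≥ |A| exp (|Φ| ρ²)`. On the other hand, expanding the product, dissociativity kills
every non-constant term, so `∑ x, p x = |G| cosh ρ ^ |Φ| ≤ |G| exp (|Φ| ρ² / 2)`. Comparing the two
bounds gives `α exp (|Φ| ρ² / 2) ≤ 1`.
-/

open Finset Real
open scoped BigOperators ComplexConjugate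

lemma mulDissociated_of_forall_prod_zpow_eq_one {α : Type*} [CommGroup α] {s : Finset α}
    (hs : ∀ ε : α → ℤ, (∀ a, ε a = -1 ∨ ε a = 0 ∨ ε a = 1) →
      ∏ a ∈ s, a ^ ε a = 1 → ∀ a ∈ s, ε a = 0) :
    MulDissociated (s : Set α) := by
  classical
  intro t ht u hu htu
  rw [Set.mem_ofPred_eq, coe_subset] at ht hu
  have hε := hs (Set.indicator t 1 - Set.indicator u 1)
    (fun a ↦ by by_cases a ∈ t <;> by_cases a ∈ u <;> simp [*])
    (by simp [prod_div_distrib, zpow_sub, ← div_eq_mul_inv, Set.indicator, pow_ite,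
      inter_eq_right.2, *])
  ext a
  constructor <;> intro ha
  · have := hε a (ht ha); by_cases a ∈ u <;> simp_all
  · have := hε a (hu ha); by_cases a ∈ t <;> simp_all

lemma card_mul_exp_le_sum_exp {ι : Type*} (s : Finset ι) (t : ι → ℝ) {m : ℝ}
    (hm : #s * m ≤ ∑ i ∈ s, t i) : #s * exp m ≤ ∑ i ∈ s, exp (t i) := by
  have tangent : ∀ i ∈ s, exp m * (1 + (t i - m)) ≤ exp (t i) := fun i _ ↦ by
    calc exp m * (1 + (t i - m)) ≤ exp m * exp (t i - m) := by
          gcongr; linarith [add_one_le_exp (t i - m)]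
      _ = exp (t i) := by rw [← exp_add]; ring_nf
  calc #s * exp m ≤ exp m * (#s + (∑ i ∈ s, t i - #s * m)) := by nlinarith [exp_pos m]
    _ = ∑ i ∈ s, exp m * (1 + (t i - m)) := by
      rw [← mul_sum, sum_add_distrib, sum_sub_distrib]; simp
    _ ≤ ∑ i ∈ s, exp (t i) := sum_le_sum tangent

section RieszProduct

variable {G : Type*} [AddCommGroup G] [Fintype G]

lemma AddDissociated.expect_prod_add_re {Φ : Finset (AddChar G ℂ)}
    (hΦ : AddDissociated (Φ : Set (AddChar G ℂ))) (a : ℝ) (w : AddChar G ℂ → ℂ) :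
    𝔼 x, ∏ ψ ∈ Φ, (a + (w ψ * ψ x).re) = a ^ #Φ := by
  classical
  have hd : {ψ | (if ψ ∈ Φ then w ψ else 0) ≠ 0} ⊆ (Φ : Set (AddChar G ℂ)) := fun ψ ↦ by
    by_cases ψ ∈ Φ <;> simp_all
  have := (hΦ.subset hd).randomisation (fun ψ ↦ if ψ ∈ Φ then a else 1)
  have hfactor : ∀ x ψ, ((if ψ ∈ Φ then a else 1) + ((if ψ ∈ Φ then w ψ else 0) * ψ x).re)
      = if ψ ∈ Φ then a + (w ψ * ψ x).re else 1 := fun x ψ ↦ by split_ifs <;> simp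
  simp only [hfactor, prod_ite_mem, univ_inter, prod_const] at this
  exact this

lemma re_conj_div_norm_mul (w : ℂ) : (conj w / ‖w‖ * w).re = ‖w‖ := by
  rcases eq_or_ne w 0 with rfl | hw
  · simp
  rw [div_mul_eq_mul_div, Complex.conj_mul', ← Complex.ofReal_pow, ← Complex.ofReal_div,
    Complex.ofReal_re, sq, mul_div_cancel_right₀ _ (norm_ne_zero_iff.2 hw)]

lemma norm_conj_div_norm_le_one (w : ℂ) : ‖conj w / ‖w‖‖ ≤ 1 := by
  rw [norm_div, Complex.norm_conj, Complex.norm_real, norm_norm]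
  exact div_self_le_one _

lemma card_mul_exp_le_card_mul_cosh_pow {ρ : ℝ} (hρ : 0 ≤ ρ) (A : Finset G)
    {Φ : Finset (AddChar G ℂ)} (hΦ : AddDissociated (Φ : Set (AddChar G ℂ)))
    (hA : ∀ φ ∈ Φ, ρ * #A ≤ ‖∑ x ∈ A, φ x‖) :
    #A * exp (#Φ * ρ ^ 2) ≤ Fintype.card G * cosh ρ ^ #Φ := by
  set z : AddChar G ℂ → ℂ := fun φ ↦ conj (∑ x ∈ A, φ x) / ‖∑ x ∈ A, φ x‖
  set t : G → ℝ := fun x ↦ ∑ φ ∈ Φ, (z φ * φ x).re * ρ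
  set p : G → ℝ := fun x ↦ ∏ φ ∈ Φ, (cosh ρ + (z φ * φ x).re * sinh ρ)
  have h_mean : #A * (#Φ * ρ ^ 2) ≤ ∑ x ∈ A, t x := by
    have hsum : ∑ x ∈ A, t x = ∑ φ ∈ Φ, ‖∑ x ∈ A, φ x‖ * ρ := by
      simp only [t, z]
      rw [sum_comm]
      refine sum_congr rfl fun φ _ ↦ ?_
      rw [← sum_mul, ← Complex.re_sum, ← mul_sum, re_conj_div_norm_mul]
    rw [hsum]
    calc #A * (#Φ * ρ ^ 2) = ∑ φ ∈ Φ, ρ * #A * ρ := by rw [sum_const, nsmul_eq_mul]; ring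
      _ ≤ ∑ φ ∈ Φ, ‖∑ x ∈ A, φ x‖ * ρ := by gcongr with φ hφ; exact hA φ hφ
  have h_exp_le : ∀ x, exp (t x) ≤ p x := fun x ↦ by
    rw [exp_sum]
    refine prod_le_prod (fun _ _ ↦ (exp_pos _).le) fun φ _ ↦ exp_mul_le_cosh_add_mul_sinh ?_ ρ
    calc |(z φ * φ x).re| ≤ ‖z φ * φ x‖ := Complex.abs_re_le_norm _
      _ ≤ 1 := by rw [norm_mul, AddChar.norm_apply, mul_one]; exact norm_conj_div_norm_le_one _
  have h_riesz : ∑ x, p x = Fintype.card G * cosh ρ ^ #Φ := by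
    rw [← Fintype.card_mul_expect, ← hΦ.expect_prod_add_re (cosh ρ) (fun φ ↦ sinh ρ * z φ)]
    congr! 3 with x φ
    rw [mul_assoc, Complex.re_ofReal_mul, mul_comm]
  calc #A * exp (#Φ * ρ ^ 2) ≤ ∑ x ∈ A, exp (t x) := card_mul_exp_le_sum_exp A t h_mean
    _ ≤ ∑ x ∈ A, p x := sum_le_sum fun x _ ↦ h_exp_le x
    _ ≤ ∑ x, p x := sum_le_sum_of_subset_of_nonneg (subset_univ A)
      fun x _ _ ↦ (exp_pos _).le.trans (h_exp_le x)
    _ = Fintype.card G * cosh ρ ^ #Φ := h_riesz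

end RieszProduct

theorem stmt6_general {G : Type*} [AddCommGroup G] [Fintype G] (ρ α : ℝ)
    (hρ0 : 0 < ρ) (hα0 : 0 < α)
    (A : Finset G) (hcard : (A.card : ℝ) = α * Fintype.card G)
    (Φ : Finset (AddChar G ℂ))
    (hΦΓ : ∀ φ ∈ Φ, ρ * α ≤ ‖(Fintype.card G : ℂ)⁻¹ * ∑ x ∈ A, φ x‖)
    (hdiss : ∀ ε : AddChar G ℂ → ℤ, (∀ γ, ε γ = -1 ∨ ε γ = 0 ∨ ε γ = 1) →
      (∏ γ ∈ Φ, γ ^ ε γ) = 1 → ∀ γ ∈ Φ, ε γ = 0) :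
    (Φ.card : ℝ) ≤ 2 / ρ ^ 2 * Real.log (1 / α) := by
  have hG : (0 : ℝ) < Fintype.card G := by simp [Fintype.card_pos]
  have hA : ∀ φ ∈ Φ, ρ * #A ≤ ‖∑ x ∈ A, φ x‖ := fun φ hφ ↦ by
    have := hΦΓ φ hφ
    rw [norm_mul, norm_inv, Complex.norm_natCast, ← div_eq_inv_mul, le_div_iff₀ hG] at this
    rwa [hcard, ← mul_assoc]
  -- `AddDissociated` on `AddChar G ℂ` unfolds to `MulDissociated`: its `+` is pointwise `*`.
  have hexp := card_mul_exp_le_card_mul_cosh_pow hρ0.le A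
    (mulDissociated_of_forall_prod_zpow_eq_one hdiss) hA
  have hcosh : cosh ρ ^ #Φ ≤ exp (#Φ * ρ ^ 2 / 2) := by
    rw [mul_div_assoc, exp_nat_mul]
    exact pow_le_pow_left₀ (cosh_pos ρ).le (cosh_le_exp_half_sq ρ) _
  have hdensity : α * exp (#Φ * ρ ^ 2) ≤ exp (#Φ * ρ ^ 2 / 2) := by
    refine le_of_mul_le_mul_left ?_ hG
    calc Fintype.card G * (α * exp (#Φ * ρ ^ 2)) = #A * exp (#Φ * ρ ^ 2) := by rw [hcard]; ring
      _ ≤ Fintype.card G * cosh ρ ^ #Φ := hexp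
      _ ≤ Fintype.card G * exp (#Φ * ρ ^ 2 / 2) := by gcongr
  have hlog := log_le_log (by positivity) hdensity
  rw [log_mul hα0.ne' (exp_pos _).ne', log_exp, log_exp] at hlog
  rw [one_div, log_inv, div_mul_eq_mul_div, le_div_iff₀ (by positivity)]
  linarith

/-- **Chang's inequality.** If `A` has density `α` in `G` and `Φ` is a dissociated set of
characters each of whose Fourier coefficients on `A` is at least `ρα` in modulus, then
`|Φ| ≤ 2ρ⁻² log(1/α)`. -/
theorem stmt6 {G : Type*} [AddCommGroup G] [Fintype G] (ρ α : ℝ)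
    (hρ0 : 0 < ρ) (hρ1 : ρ ≤ 1) (hα0 : 0 < α) (hα1 : α ≤ 1)
    (A : Finset G) (hcard : (A.card : ℝ) = α * Fintype.card G)
    (Φ : Finset (AddChar G ℂ))
    (hΦΓ : ∀ φ ∈ Φ, ρ * α ≤ ‖(Fintype.card G : ℂ)⁻¹ * ∑ x ∈ A, φ x‖)
    (hdiss : ∀ ε : AddChar G ℂ → ℤ, (∀ γ, ε γ = -1 ∨ ε γ = 0 ∨ ε γ = 1) →
      (∏ γ ∈ Φ, γ ^ ε γ) = 1 → ∀ γ ∈ Φ, ε γ = 0) :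
    (Φ.card : ℝ) ≤ 2 / ρ ^ 2 * Real.log (1 / α) :=
  stmt6_general ρ α hρ0 hα0 A hcard Φ hΦΓ hdiss
end

section
/- Let G be a finite abelian group and A ⊆ G a nonempty set with |A + A| ≤ K|A|. Then 2A - 2A contains a Bohr set B(Γ, δ) where |Γ| ≤ 8K·log(1/α) and δ ≥ (48K·log(1/α))⁻¹, with α = |A|/|G|. -/
/-!
Put `ρ = (2√K)⁻¹` and let `S` be the large spectrum of `A`, the characters `γ` with
`|∑_{a ∈ A} γ a| ≥ ρ|A|`. By Chang's lemma (a Riesz product argument) every dissociated subset of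
`S` has at most `2ρ⁻² log(1/α) = 8K log(1/α)` elements, so `S` lies in the `{-1, 0, 1}`-span of
such a set `Γ`. On `B(Γ, (48K log(1/α))⁻¹)` the arguments of the `γ ∈ Γ` add up to at most `π/3`,
hence `Re γ x ≥ 1/2` for every `γ ∈ S`. Then `∑_γ |∑_{a ∈ A} γ a|⁴ Re γ x`, which counts the
representations `x = a₁ + a₂ - a₃ - a₄`, is positive: `S` carries at least half of the fourth
moment `|G| E(A) ≥ |G| |A|³ / K`, while by Parseval the other characters weigh at most
`(ρ|A|)² |G| |A| = |G| |A|³ / (4K)`.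
-/

open scoped Pointwise

section
open scoped Combinatorics.Additive ComplexConjugate
open Finset

lemma Complex.cos_sum_abs_arg_le_re_prod_zpow {ι : Type*} {s : Finset ι} {z : ι → ℂ}
    (hz : ∀ i ∈ s, ‖z i‖ = 1) {ε : ι → ℤ} (hε : ∀ i, ε i = -1 ∨ ε i = 0 ∨ ε i = 1)
    (hs : ∑ i ∈ s, |arg (z i)| ≤ Real.pi) :
    Real.cos (∑ i ∈ s, |arg (z i)|) ≤ (∏ i ∈ s, z i ^ ε i).re := by
  have hprod : ∏ i ∈ s, z i ^ ε i = exp (↑(∑ i ∈ s, ε i * arg (z i)) * I) := by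
    push_cast
    rw [sum_mul, exp_sum]
    refine prod_congr rfl fun i hi ↦ ?_
    conv_lhs => rw [← norm_mul_exp_arg_mul_I (z i), hz i hi, ofReal_one, one_mul]
    rw [← exp_int_mul, mul_assoc]
  have habs : |∑ i ∈ s, ε i * arg (z i)| ≤ ∑ i ∈ s, |arg (z i)| := by
    refine (abs_sum_le_sum_abs _ _).trans (sum_le_sum fun i _ ↦ ?_)
    rw [abs_mul]
    rcases hε i with h | h | h <;> simp [h]
  rw [hprod, exp_ofReal_mul_I_re, ← Real.cos_abs (∑ i ∈ s, (ε i : ℝ) * arg (z i))]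
  exact Real.cos_le_cos_of_nonneg_of_le_pi (abs_nonneg _) hs habs

lemma Finset.sum_le_card_mul_log_sum_exp_div {ι : Type*} {s : Finset ι} (hs : s.Nonempty)
    (f : ι → ℝ) : ∑ i ∈ s, f i ≤ #s * Real.log ((∑ i ∈ s, Real.exp (f i)) / #s) := by
  have hs' : (0 : ℝ) < #s := by exact_mod_cast hs.card_pos
  have hJensen := convexOn_exp.map_sum_le (t := s) (w := fun _ ↦ (#s : ℝ)⁻¹) (p := f)
    (fun _ _ ↦ by positivity) (by simp [hs'.ne']) (fun _ _ ↦ Set.mem_univ _)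
  simp only [smul_eq_mul, ← mul_sum] at hJensen
  rw [← div_le_iff₀' hs', div_eq_inv_mul, div_eq_inv_mul,
    Real.le_log_iff_exp_le (by positivity)]
  exact hJensen

variable {G : Type*} [AddCommGroup G] [Fintype G]

def charSum (A : Finset G) (γ : AddChar G ℂ) : ℂ := ∑ a ∈ A, γ a

noncomputable def largeSpectrum (A : Finset G) (ρ : ℝ) : Finset (AddChar G ℂ) :=
  {γ | ρ * #A ≤ ‖charSum A γ‖}

lemma mem_largeSpectrum {A : Finset G} {ρ : ℝ} {γ : AddChar G ℂ} :
    γ ∈ largeSpectrum A ρ ↔ ρ * #A ≤ ‖charSum A γ‖ := by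
  simp [largeSpectrum]

lemma AddChar.sum_sum_apply_eq_card_mul {ι : Type*} [DecidableEq G] (s : Finset ι) (f : ι → G) :
    ∑ γ : AddChar G ℂ, ∑ i ∈ s, γ (f i) = Fintype.card G * #{i ∈ s | f i = 0} := by
  rw [Finset.sum_comm]
  simp_rw [AddChar.sum_apply_eq_ite]
  rw [Finset.sum_ite, sum_const_zero, add_zero, sum_const, nsmul_eq_mul, mul_comm]

lemma ofReal_norm_charSum_sq (A : Finset G) (γ : AddChar G ℂ) :
    ((‖charSum A γ‖ ^ 2 : ℝ) : ℂ) = ∑ p ∈ A ×ˢ A, γ (p.1 - p.2) := by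
  rw [Complex.ofReal_pow, ← Complex.mul_conj']
  simp_rw [charSum, map_sum, sum_mul_sum, sum_product, sub_eq_add_neg,
    AddChar.map_add_eq_mul, AddChar.map_neg_eq_conj]

lemma sum_norm_charSum_sq [DecidableEq G] (A : Finset G) :
    ∑ γ : AddChar G ℂ, ‖charSum A γ‖ ^ 2 = Fintype.card G * #A := by
  have := AddChar.sum_sum_apply_eq_card_mul (A ×ˢ A) fun p ↦ p.1 - p.2
  simp_rw [← ofReal_norm_charSum_sq, sub_eq_zero, ← diag_eq_filter, diag_card] at this
  exact_mod_cast this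

lemma sum_norm_charSum_pow_four_mul_apply_neg [DecidableEq G] (A : Finset G) (x : G) :
    ∑ γ : AddChar G ℂ, ((‖charSum A γ‖ ^ 4 : ℝ) : ℂ) * γ (-x) =
      Fintype.card G * #{q ∈ (A ×ˢ A) ×ˢ (A ×ˢ A) | q.1.1 - q.1.2 + (q.2.1 - q.2.2) = x} := by
  have expand (γ : AddChar G ℂ) : ((‖charSum A γ‖ ^ 4 : ℝ) : ℂ) * γ (-x) =
      ∑ q ∈ (A ×ˢ A) ×ˢ (A ×ˢ A), γ (q.1.1 - q.1.2 + (q.2.1 - q.2.2) - x) := by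
    rw [show ‖charSum A γ‖ ^ 4 = (‖charSum A γ‖ ^ 2) ^ 2 by ring, Complex.ofReal_pow,
      ofReal_norm_charSum_sq, sq, sum_mul_sum, ← sum_product', sum_mul]
    simp_rw [sub_eq_add_neg _ x, AddChar.map_add_eq_mul]
  simp_rw [expand, AddChar.sum_sum_apply_eq_card_mul, sub_eq_zero]

lemma sum_norm_charSum_pow_four [DecidableEq G] (A : Finset G) :
    ∑ γ : AddChar G ℂ, ‖charSum A γ‖ ^ 4 = Fintype.card G * E[A] := by
  have := sum_norm_charSum_pow_four_mul_apply_neg A 0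
  simp_rw [neg_zero, AddChar.map_zero_eq_one, mul_one, sub_add_sub_comm, sub_eq_zero] at this
  rw [addEnergy]
  exact_mod_cast this

lemma sum_norm_charSum_pow_four_mul_re_eq_zero [DecidableEq G] {A : Finset G} {x : G}
    (hx : x ∉ A + A - A - A) :
    ∑ γ : AddChar G ℂ, ‖charSum A γ‖ ^ 4 * (γ x).re = 0 := by
  have := sum_norm_charSum_pow_four_mul_apply_neg A x
  rw [filter_false_of_mem, card_empty, Nat.cast_zero, mul_zero] at this
  · simpa only [Complex.re_sum, Complex.re_ofReal_mul, AddChar.map_neg_eq_conj, Complex.conj_re,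
      Complex.zero_re] using congr_arg Complex.re this
  rintro ⟨⟨a₁, a₂⟩, b₁, b₂⟩ hq rfl
  simp only [mem_product] at hq
  rw [show a₁ - a₂ + (b₁ - b₂) = a₁ + b₁ - a₂ - b₂ by abel] at hx
  exact hx (sub_mem_sub (sub_mem_sub (add_mem_add hq.1.1 hq.2.1) hq.1.2) hq.2.2)

lemma mem_add_sub_sub_of_half_le_re [DecidableEq G] {A : Finset G} {ρ : ℝ}
    (hρ : 3 * ρ ^ 2 * #(A + A) < #A) {x : G}
    (hx : ∀ γ ∈ largeSpectrum A ρ, 1 / 2 ≤ (γ x).re) :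
    x ∈ A + A - A - A := by
  by_contra hxA
  -- Off the large spectrum, `‖charSum A γ‖ ^ 4 ≤ (ρ * #A) ^ 2 * ‖charSum A γ‖ ^ 2`.
  have hterm (γ : AddChar G ℂ) : ‖charSum A γ‖ ^ 4 / 2 - 3 / 2 * (ρ * #A) ^ 2 * ‖charSum A γ‖ ^ 2
      ≤ ‖charSum A γ‖ ^ 4 * (γ x).re := by
    have hre : -1 ≤ (γ x).re :=
      (abs_le.1 ((Complex.abs_re_le_norm _).trans (AddChar.norm_apply γ x).le)).1
    have hr := norm_nonneg (charSum A γ)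
    by_cases hγ : γ ∈ largeSpectrum A ρ
    · nlinarith [hx γ hγ, pow_nonneg hr 4, sq_nonneg (ρ * #A), sq_nonneg ‖charSum A γ‖]
    · have := mul_self_lt_mul_self hr (not_le.1 (mt mem_largeSpectrum.2 hγ))
      nlinarith [pow_nonneg hr 4, sq_nonneg ‖charSum A γ‖]
  have hsum := sum_le_sum fun γ (_ : γ ∈ univ) ↦ hterm γ
  rw [sum_norm_charSum_pow_four_mul_re_eq_zero hxA, sum_sub_distrib, ← sum_div, ← mul_sum,
    sum_norm_charSum_pow_four, sum_norm_charSum_sq] at hsum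
  have hN : (0 : ℝ) < Fintype.card G := by exact_mod_cast Fintype.card_pos_iff.2 ⟨0⟩
  have hE : (E[A] : ℝ) ≤ 3 * ρ ^ 2 * #A ^ 3 := by nlinarith
  have hA : (0 : ℝ) < #A := by nlinarith [sq_nonneg ρ]
  have hCS : (#A : ℝ) ^ 2 * #A ^ 2 ≤ #(A + A) * E[A] := by
    exact_mod_cast le_card_add_mul_addEnergy A A
  nlinarith [mul_le_mul_of_nonneg_left hE (Nat.cast_nonneg (α := ℝ) #(A + A)),
    mul_lt_mul_of_pos_right hρ (pow_pos hA 3)]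

namespace AddChar

lemma sum_prod_re_mul_apply_eq_zero {U : Finset (AddChar G ℂ)}
    (hU : MulDissociated (U : Set (AddChar G ℂ))) (hU₀ : U.Nonempty) (θ : AddChar G ℂ → ℂ) :
    ∑ x : G, ∏ χ ∈ U, (θ χ * χ x).re = 0 := by
  classical
  have hre (z : ℂ) : (z.re : ℂ) = (z + conj z) / 2 := by rw [Complex.add_conj]; push_cast; ring
  have hconj (χ : AddChar G ℂ) (x : G) : conj (θ χ * χ x) = conj (θ χ) * χ⁻¹ x := by
    rw [map_mul, inv_apply', inv_apply_eq_conj]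
  -- Expanding the product, each term is a multiple of a nontrivial character, by dissociativity.
  have hψ : ∀ T ∈ U.powerset, ∑ x : G, ((∏ χ ∈ T, χ) * ∏ χ ∈ U \ T, χ⁻¹) x = 0 := by
    intro T hT
    rw [sum_eq_zero_iff_ne_zero]
    intro h
    rw [← one_eq_zero, mul_eq_one_iff_eq_inv, prod_inv_distrib, inv_inv] at h
    have hT : T = U \ T := hU (coe_subset.2 (mem_powerset.1 hT)) (coe_subset.2 sdiff_subset) h
    have hT₀ : T = ∅ := by
      have := (disjoint_sdiff : Disjoint T (U \ T))
      rwa [← hT, disjoint_self, bot_eq_empty] at this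
    rw [hT₀, sdiff_empty] at hT
    exact hU₀.ne_empty hT.symm
  apply Complex.ofReal_injective
  push_cast
  simp_rw [hre, prod_div_distrib, prod_const, ← sum_div, hconj, prod_add]
  rw [sum_comm, div_eq_zero_iff]
  left
  refine sum_eq_zero fun T hT ↦ ?_
  have hsplit (x : G) : (∏ χ ∈ T, θ χ * χ x) * ∏ χ ∈ U \ T, conj (θ χ) * χ⁻¹ x =
      ((∏ χ ∈ T, θ χ) * ∏ χ ∈ U \ T, conj (θ χ)) * ((∏ χ ∈ T, χ) * ∏ χ ∈ U \ T, χ⁻¹) x := by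
    rw [mul_apply, prod_apply, prod_apply, prod_mul_distrib, prod_mul_distrib]
    ring
  simp_rw [hsplit, ← mul_sum, hψ T hT, mul_zero]

lemma sum_prod_cosh_add_re_mul_sinh {Λ : Finset (AddChar G ℂ)}
    (hΛ : MulDissociated (Λ : Set (AddChar G ℂ))) (θ : AddChar G ℂ → ℂ) (t : ℝ) :
    ∑ x : G, ∏ χ ∈ Λ, (Real.cosh t + (θ χ * χ x).re * Real.sinh t) =
      Fintype.card G * Real.cosh t ^ #Λ := by
  classical
  simp_rw [prod_add, prod_const, prod_mul_distrib, prod_const]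
  rw [sum_comm, sum_eq_single_of_mem Λ (mem_powerset_self Λ)]
  · simp
  intro T hT hTΛ
  simp only [← mul_sum, ← sum_mul]
  rw [sum_prod_re_mul_apply_eq_zero (hΛ.subset (coe_subset.2 sdiff_subset)), zero_mul, mul_zero]
  exact sdiff_nonempty.2 fun h ↦ hTΛ ((mem_powerset.1 hT).antisymm h)

lemma sum_exp_mul_sum_re_le {Λ : Finset (AddChar G ℂ)}
    (hΛ : MulDissociated (Λ : Set (AddChar G ℂ))) {θ : AddChar G ℂ → ℂ}
    (hθ : ∀ χ ∈ Λ, ‖θ χ‖ ≤ 1) (t : ℝ) :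
    ∑ x : G, Real.exp (t * ∑ χ ∈ Λ, (θ χ * χ x).re) ≤
      Fintype.card G * Real.exp (t ^ 2 * #Λ / 2) := calc
  _ ≤ ∑ x : G, ∏ χ ∈ Λ, (Real.cosh t + (θ χ * χ x).re * Real.sinh t) := by
    refine sum_le_sum fun x _ ↦ ?_
    rw [mul_sum, Real.exp_sum]
    refine prod_le_prod (fun _ _ ↦ (Real.exp_pos _).le) fun χ hχ ↦ ?_
    rw [mul_comm t]
    refine Real.exp_mul_le_cosh_add_mul_sinh ((Complex.abs_re_le_norm _).trans ?_) t
    rw [norm_mul, norm_apply, mul_one]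
    exact hθ χ hχ
  _ = Fintype.card G * Real.cosh t ^ #Λ := sum_prod_cosh_add_re_mul_sinh hΛ θ t
  _ ≤ Fintype.card G * Real.exp (t ^ 2 / 2) ^ #Λ := by
    gcongr
    exact Real.cosh_le_exp_half_sq t
  _ = Fintype.card G * Real.exp (t ^ 2 * #Λ / 2) := by
    rw [← Real.exp_nat_mul]; ring_nf

end AddChar

theorem card_mul_sq_le_two_mul_log {A : Finset G} (hA : A.Nonempty) {Λ : Finset (AddChar G ℂ)}
    (hΛ : MulDissociated (Λ : Set (AddChar G ℂ))) {ρ : ℝ} (hρ : 0 ≤ ρ)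
    (hΛA : Λ ⊆ largeSpectrum A ρ) :
    #Λ * ρ ^ 2 ≤ 2 * Real.log (Fintype.card G / #A) := by
  set θ : AddChar G ℂ → ℂ := fun χ ↦ conj (charSum A χ) / ‖charSum A χ‖
  set f : G → ℝ := fun x ↦ ∑ χ ∈ Λ, (θ χ * χ x).re
  have hθ (χ : AddChar G ℂ) : ‖θ χ‖ ≤ 1 := by
    simp only [θ, norm_div, Complex.norm_conj, Complex.norm_real, norm_norm]
    exact div_self_le_one _
  have hθF (z : ℂ) : (conj z / ‖z‖ * z).re = ‖z‖ := by
    rw [div_mul_eq_mul_div, Complex.conj_mul', ← Complex.ofReal_pow, ← Complex.ofReal_div,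
      Complex.ofReal_re, sq, mul_self_div_self]
  have hfA : #Λ * (ρ * #A) ≤ ∑ x ∈ A, f x := calc
    #Λ * (ρ * #A) ≤ ∑ χ ∈ Λ, ‖charSum A χ‖ := by
      simpa using sum_le_sum fun χ hχ ↦ mem_largeSpectrum.1 (hΛA hχ)
    _ = ∑ x ∈ A, f x := by
      simp only [f, θ]
      rw [sum_comm]
      refine sum_congr rfl fun χ _ ↦ ?_
      rw [← Complex.re_sum, ← mul_sum]
      exact (hθF (charSum A χ)).symm
  have hA₀ : (0 : ℝ) < #A := by exact_mod_cast hA.card_pos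
  have hexp : ∑ x ∈ A, Real.exp (ρ * f x) ≤ Fintype.card G * Real.exp (ρ ^ 2 * #Λ / 2) :=
    (sum_le_univ_sum_of_nonneg fun _ ↦ (Real.exp_pos _).le).trans
      (AddChar.sum_exp_mul_sum_re_le hΛ (fun χ _ ↦ hθ χ) ρ)
  have hlog : Real.log ((∑ x ∈ A, Real.exp (ρ * f x)) / #A) ≤
      Real.log (Fintype.card G / #A) + ρ ^ 2 * #Λ / 2 := by
    rw [← Real.log_exp (ρ ^ 2 * #Λ / 2), ← Real.log_mul (by positivity) (Real.exp_pos _).ne']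
    gcongr
    rw [div_mul_eq_mul_div]
    exact div_le_div_of_nonneg_right hexp hA₀.le
  have := sum_le_card_mul_log_sum_exp_div hA fun x ↦ ρ * f x
  rw [← mul_sum] at this
  nlinarith [mul_le_mul_of_nonneg_left hfA hρ, mul_le_mul_of_nonneg_left hlog hA₀.le]

lemma exists_largeSpectrum_subset_mulSpan {A : Finset G} (hA : A.Nonempty) {ρ : ℝ}
    (hρ : 0 < ρ) : ∃ Γ : Finset (AddChar G ℂ),
      #Γ * ρ ^ 2 ≤ 2 * Real.log (Fintype.card G / #A) ∧ largeSpectrum A ρ ⊆ mulSpan Γ := by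
  classical
  set L := Real.log (Fintype.card G / #A)
  have hL : 0 ≤ L := Real.log_nonneg <|
    (one_le_div (by exact_mod_cast hA.card_pos)).2 (by exact_mod_cast card_le_univ A)
  obtain ⟨Γ, -, hΓ, hSΓ⟩ := exists_subset_mulSpan_card_le_of_forall_mulDissociated
    (d := ⌊2 * L / ρ ^ 2⌋₊) fun Λ hΛS hΛ ↦ Nat.le_floor <|
      (le_div_iff₀ (by positivity)).2 (card_mul_sq_le_two_mul_log hA hΛ hρ.le hΛS)
  exact ⟨Γ, (le_div_iff₀ (by positivity)).1
    ((Nat.cast_le.2 hΓ).trans (Nat.floor_le (by positivity))), hSΓ⟩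

lemma AddChar.half_le_re_apply_of_mem_mulSpan {Λ : Finset (AddChar G ℂ)} {δ : ℝ}
    (hΛδ : #Λ * δ ≤ 1 / 6) {x : G}
    (hx : ∀ γ ∈ Λ, (2 * Real.pi)⁻¹ * |Complex.arg (γ x)| ≤ δ) {γ : AddChar G ℂ}
    (hγ : γ ∈ mulSpan Λ) : 1 / 2 ≤ (γ x).re := by
  obtain ⟨ε, hε, rfl⟩ := mem_mulSpan.1 hγ
  have harg : ∑ χ ∈ Λ, |Complex.arg (χ x)| ≤ Real.pi / 3 := calc
    ∑ χ ∈ Λ, |Complex.arg (χ x)| ≤ ∑ _χ ∈ Λ, 2 * Real.pi * δ :=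
      sum_le_sum fun χ hχ ↦ by
        have := hx χ hχ
        rwa [inv_mul_le_iff₀ (by positivity)] at this
    _ = 2 * Real.pi * (#Λ * δ) := by rw [sum_const, nsmul_eq_mul]; ring
    _ ≤ Real.pi / 3 := by nlinarith [Real.pi_pos]
  rw [AddChar.prod_apply]
  simp_rw [AddChar.zpow_apply]
  have := Complex.cos_sum_abs_arg_le_re_prod_zpow (s := Λ) (z := fun χ ↦ χ x)
    (fun χ _ ↦ AddChar.norm_apply χ x) hε (harg.trans (by linarith [Real.pi_pos]))
  refine le_trans ?_ this
  rw [← Real.cos_pi_div_three]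
  exact Real.cos_le_cos_of_nonneg_of_le_pi (sum_nonneg fun _ _ ↦ abs_nonneg _)
    (by linarith [Real.pi_pos]) harg

end

theorem stmt10_general {G : Type*} [AddCommGroup G] [Fintype G] [DecidableEq G]
    (A : Finset G) (hA : A.Nonempty) (K : ℝ)
    (hK : ((A + A).card : ℝ) ≤ K * A.card) :
    ∃ (Γ : Finset (AddChar G ℂ)) (δ : ℝ),
      (Γ.card : ℝ) ≤ 8 * K * Real.log ((Fintype.card G : ℝ) / A.card) ∧
      (48 * K * Real.log ((Fintype.card G : ℝ) / A.card))⁻¹ ≤ δ ∧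
      {x : G | ∀ γ ∈ Γ, (2 * Real.pi)⁻¹ * |Complex.arg (γ x)| ≤ δ} ⊆
        ↑(A + A - A - A) := by
  set L := Real.log ((Fintype.card G : ℝ) / A.card)
  have hA₀ : (0 : ℝ) < A.card := by exact_mod_cast hA.card_pos
  have hAA : (A.card : ℝ) ≤ (A + A).card := by exact_mod_cast Finset.card_le_card_add_right hA
  have hK₀ : 0 < K := by nlinarith
  have hL : 0 ≤ L :=
    Real.log_nonneg ((one_le_div hA₀).2 (by exact_mod_cast Finset.card_le_univ A))
  set ρ := (2 * √K)⁻¹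
  have hρ : ρ ^ 2 = (4 * K)⁻¹ := by rw [inv_pow, mul_pow, Real.sq_sqrt hK₀.le]; norm_num
  obtain ⟨Γ, hΓ, hSΓ⟩ := exists_largeSpectrum_subset_mulSpan hA (show 0 < ρ by positivity)
  rw [hρ, ← div_eq_mul_inv, div_le_iff₀ (by positivity)] at hΓ
  have hΓL : (Γ.card : ℝ) ≤ 8 * K * L := by linarith
  refine ⟨Γ, (48 * K * L)⁻¹, hΓL, le_rfl, fun x hx ↦ ?_⟩
  have hΓδ : Γ.card * (48 * K * L)⁻¹ ≤ 1 / 6 := calc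
    _ ≤ 8 * K * L * (48 * K * L)⁻¹ := by gcongr
    _ = 1 / 6 * (8 * K * L * (8 * K * L)⁻¹) := by ring
    _ ≤ 1 / 6 := mul_le_of_le_one_right (by norm_num) mul_inv_le_one
  refine Finset.mem_coe.2 (mem_add_sub_sub_of_half_le_re (ρ := ρ) ?_ fun γ hγ ↦
    AddChar.half_le_re_apply_of_mem_mulSpan hΓδ hx (hSΓ hγ))
  calc 3 * ρ ^ 2 * (A + A).card ≤ 3 * (4 * K)⁻¹ * (K * A.card) := by rw [hρ]; gcongr
    _ = 3 / 4 * A.card := by field_simp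
    _ < A.card := by linarith

/-- **Bogolyubov–Chang.** If `|A + A| ≤ K|A|` then `2A - 2A` contains a Bohr set
`B(Γ, δ)` with `|Γ| ≤ 8K log(1/α)` and `δ ≥ (48K log(1/α))⁻¹`, where `α = |A|/|G|`. -/
theorem stmt10 {G : Type*} [AddCommGroup G] [Fintype G] [DecidableEq G]
    (A : Finset G) (hA : A.Nonempty) (K : ℝ)
    (hK : ((A + A).card : ℝ) ≤ K * A.card)
    (hα : (A.card : ℝ) < Fintype.card G) :
    ∃ (Γ : Finset (AddChar G ℂ)) (δ : ℝ),
      (Γ.card : ℝ) ≤ 8 * K * Real.log ((Fintype.card G : ℝ) / A.card) ∧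
      (48 * K * Real.log ((Fintype.card G : ℝ) / A.card))⁻¹ ≤ δ ∧
      {x : G | ∀ γ ∈ Γ, (2 * Real.pi)⁻¹ * |Complex.arg (γ x)| ≤ δ} ⊆
        ↑(A + A - A - A) :=
  stmt10_general A hA K hK
end

section
/- Let A be a finite subset of 𝔽₂^m (for some m) with |A + A| ≤ K|A|. Then there exists an integer m' and a subset A' ⊆ 𝔽₂^{m'} with 2^{m'} ≤ K⁴|A| such that A is Freiman 2-isomorphic to A'. -/
open scoped Pointwise

/-!
Take a subspace `W` of `𝔽₂^m` maximal among those meeting `S = 2A - 2A` only in `0`. Since `W`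
avoids the nonzero differences `a₁ + a₂ - a₃ - a₄`, the projection `𝔽₂^m → 𝔽₂^m / W` is a
Freiman 2-isomorphism on `A`. By maximality every coset of `W` meets `S`, so
`|𝔽₂^m / W| ≤ |S| ≤ K⁴|A|` by the Plünnecke–Ruzsa inequality.
-/

section FreimanIso

variable {F G H : Type*} [AddCommGroup G] [AddCommGroup H] [FunLike F G H]
  [AddMonoidHomClass F G H]

lemma isAddFreimanIso_image_of_eq_zero {f : F} {A : Set G}
    (hf : ∀ x ∈ A + A - (A + A), f x = 0 → x = 0) :
    IsAddFreimanIso 2 A (f '' A) f := by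
  have key : ∀ a ∈ A, ∀ b ∈ A, ∀ c ∈ A, ∀ d ∈ A,
      f a + f b = f c + f d → a + b = c + d := by
    intro a ha b hb c hc d hd habcd
    refine sub_eq_zero.1 <| hf _
      ⟨a + b, Set.add_mem_add ha hb, c + d, Set.add_mem_add hc hd, rfl⟩ ?_
    rw [map_sub, map_add, map_add, habcd, sub_self]
  refine isAddFreimanIso_two.2 ⟨⟨Set.mapsTo_image _ _, ?_, Set.surjOn_image _ _⟩, ?_⟩
  · intro a ha b hb hab
    exact add_right_cancel (key a ha a ha b hb a ha (by rw [hab]))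
  · intro a ha b hb c hc d hd
    refine ⟨key a ha b hb c hc d hd, fun h ↦ ?_⟩
    rw [← map_add, ← map_add, h]

end FreimanIso

namespace Submodule

lemma exists_maximal_forall_mem_eq_zero {R M : Type*} [Semiring R] [AddCommMonoid M]
    [Module R M] (S : Set M) :
    ∃ W : Submodule R M, Maximal (fun W ↦ ∀ s ∈ S, s ∈ W → s = 0) W := by
  obtain ⟨W, -, hW⟩ := zorn_le_nonempty₀ {W : Submodule R M | ∀ s ∈ S, s ∈ W → s = 0}
    (fun c hcS hc W hW ↦ ⟨sSup c, fun s hs hsc ↦ by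
      obtain ⟨W', hW', hsW'⟩ := (mem_sSup_of_directed ⟨W, hW⟩ hc.directedOn).1 hsc
      exact hcS hW' s hs hsW', fun _ ↦ le_sSup⟩) ⊥ fun _ _ hs ↦ hs
  exact ⟨W, hW⟩

variable {V : Type*} [AddCommGroup V] [Module (ZMod 2) V]

/-- If `x ∉ W`, maximality gives a nonzero `w + c • x ∈ S` with `w ∈ W`; over `𝔽₂` necessarily
`c = 1`, so `w + x ∈ S` lies in the coset of `x`. -/
lemma exists_forall_mem_eq_zero_and_mkQ_image_eq_univ {S : Set V} (hS : (0 : V) ∈ S) :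
    ∃ W : Submodule (ZMod 2) V, (∀ s ∈ S, s ∈ W → s = 0) ∧ W.mkQ '' S = Set.univ := by
  obtain ⟨W, hW⟩ := exists_maximal_forall_mem_eq_zero (R := ZMod 2) S
  refine ⟨W, hW.prop, Set.eq_univ_of_forall fun q ↦ ?_⟩
  obtain ⟨x, rfl⟩ := W.mkQ_surjective q
  by_cases hx : x ∈ W
  · refine ⟨0, hS, ?_⟩
    rw [map_zero, eq_comm, mkQ_apply, Quotient.mk_eq_zero]
    exact hx
  have hlt : W < W ⊔ span (ZMod 2) {x} :=
    left_lt_sup.2 fun h ↦ hx (h (mem_span_singleton_self x))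
  obtain ⟨s, hsS, hsW', hs0⟩ : ∃ s ∈ S, s ∈ W ⊔ span (ZMod 2) {x} ∧ s ≠ 0 := by
    simpa using hW.not_prop_of_gt hlt
  obtain ⟨w, hw, y, hy, rfl⟩ := mem_sup.1 hsW'
  obtain ⟨c, rfl⟩ := mem_span_singleton.1 hy
  rcases (by decide : ∀ c : ZMod 2, c = 0 ∨ c = 1) c with rfl | rfl
  · exact absurd (hW.prop _ hsS (by simpa using hw)) hs0
  · refine ⟨w + x, by simpa using hsS, ?_⟩
    simp [(Quotient.mk_eq_zero W).2 hw]

end Submodule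

lemma exists_linearMap_fin_forall_eq_zero_and_two_pow_le {V : Type*} [AddCommGroup V]
    [Module (ZMod 2) V] [Finite V] {S : Set V} (hS : (0 : V) ∈ S) :
    ∃ (m' : ℕ) (L : V →ₗ[ZMod 2] Fin m' → ZMod 2),
      (∀ s ∈ S, L s = 0 → s = 0) ∧ 2 ^ m' ≤ S.ncard := by
  obtain ⟨W, hWS, hW⟩ := Submodule.exists_forall_mem_eq_zero_and_mkQ_image_eq_univ hS
  let e := (Module.finBasis (ZMod 2) (V ⧸ W)).equivFun
  refine ⟨_, e.toLinearMap ∘ₗ W.mkQ, fun s hs hLs ↦ hWS s hs (by simpa using hLs), ?_⟩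
  calc 2 ^ Module.finrank (ZMod 2) (V ⧸ W)
      = Nat.card (V ⧸ W) := by simp [Nat.card_congr e.toEquiv]
    _ = (W.mkQ '' S).ncard := by rw [hW, Set.ncard_univ]
    _ ≤ S.ncard := Set.ncard_image_le (Set.toFinite S)

lemma Finset.card_nsmul_sub_nsmul_le {G : Type*} [DecidableEq G] [AddCommGroup G]
    {A : Finset G} (hA : A.Nonempty) {K : ℝ} (hK : ((A + A).card : ℝ) ≤ K * A.card)
    (m n : ℕ) :
    ((m • A - n • A).card : ℝ) ≤ K ^ (m + n) * A.card := by
  have hA' : (0 : ℝ) < A.card := by exact_mod_cast hA.card_pos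
  have hratio : ((A + A).card : ℝ) / A.card ≤ K := (div_le_iff₀ hA').2 hK
  have hPR := (NNRat.cast_le (K := ℝ)).2
    (pluennecke_ruzsa_inequality_nsmul_sub_nsmul_add hA A m n)
  push_cast at hPR
  calc ((m • A - n • A).card : ℝ)
      ≤ (((A + A).card : ℝ) / A.card) ^ (m + n) * A.card := hPR
    _ ≤ K ^ (m + n) * A.card := by gcongr

/-- A subset of `𝔽₂^m` with doubling `K` has a Freiman 2-model of size at most `K⁴|A|`. -/
theorem stmt14 (m : ℕ) (A : Finset (Fin m → ZMod 2)) (hA : A.Nonempty) (K : ℝ)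
    (hK : ((A + A).card : ℝ) ≤ K * A.card) :
    ∃ (m' : ℕ) (A' : Set (Fin m' → ZMod 2)) (φ : (Fin m → ZMod 2) → (Fin m' → ZMod 2)),
      ((2 : ℝ) ^ m' ≤ K ^ 4 * A.card) ∧ IsAddFreimanIso 2 (A : Set (Fin m → ZMod 2)) A' φ := by
  classical
  set S := 2 • A - 2 • A
  have hS : (S : Set (Fin m → ZMod 2)) = A + A - (A + A) := by
    simp only [S, two_nsmul, Finset.coe_sub, Finset.coe_add]
  obtain ⟨a, ha⟩ := hA
  have h0 : (0 : Fin m → ZMod 2) ∈ (S : Set (Fin m → ZMod 2)) :=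
    hS ▸ ⟨a + a, Set.add_mem_add ha ha, a + a, Set.add_mem_add ha ha, sub_self _⟩
  obtain ⟨m', L, hL, hcard⟩ := exists_linearMap_fin_forall_eq_zero_and_two_pow_le h0
  refine ⟨m', L '' A, L, ?_, isAddFreimanIso_image_of_eq_zero (hS ▸ hL)⟩
  calc (2 : ℝ) ^ m' ≤ S.card := by exact_mod_cast Set.ncard_coe_finset S ▸ hcard
    _ ≤ K ^ 4 * A.card := Finset.card_nsmul_sub_nsmul_le ⟨a, ha⟩ hK 2 2
end

section
/- Let A ⊆ 𝔽₂^m be finite with |A+A| ≤ K|A|, and suppose that m is minimal such that A is Freiman 2-isomorphic to a subset of 𝔽₂^m. If x ∈ 𝔽₂^m lies outside 2A - 2A, then any linear map φ : 𝔽₂^m → 𝔽₂^{m-1} with kernel {0, x} induces a Freiman 2-isomorphism on A; consequently 𝔽₂^m = 2A - 2A when m is minimal and 2^m > K⁴|A| is impossible. -/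
/-!
A homomorphism that kills no nonzero element of `2A - 2A` is a Freiman 2-isomorphism from `A`
onto its image, since `f a + f b = f c + f d` says that `a + b - c - d` lies in its kernel. Over
`𝔽₂` the line spanned by a vector `x` is `{0, x}`, and for `x ≠ 0` it is the kernel of a linear
map `𝔽₂^m → 𝔽₂^(m-1)`; so a point outside `2A - 2A` would let `A` be Freiman-embedded into
`𝔽₂^(m-1)`, contradicting the minimality of `m`. Hence `2A - 2A = 𝔽₂^m`, and Plünnecke–Ruzsa
bounds its size `2^m` by `K⁴|A|`.
-/

open scoped Pointwise
open Finset

theorem isAddFreimanIso_two_image_of_map_eq_zero {F G H : Type*} [AddCommGroup G]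
    [AddCommGroup H] [FunLike F G H] [AddMonoidHomClass F G H] (f : F) {A : Set G}
    (hf : ∀ y ∈ A + A - A - A, f y = 0 → y = 0) : IsAddFreimanIso 2 A (f '' A) f := by
  have hquad : ∀ a ∈ A, ∀ b ∈ A, ∀ c ∈ A, ∀ d ∈ A, f a + f b = f c + f d → a + b = c + d := by
    intro a ha b hb c hc d hd h
    have hker : f (a + b - c - d) = 0 := by simp only [map_sub, map_add, h]; abel
    rw [← sub_eq_zero, ← sub_sub]
    exact hf _ (Set.sub_mem_sub (Set.sub_mem_sub (Set.add_mem_add ha hb) hc) hd) hker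
  refine isAddFreimanIso_two.2 ⟨⟨Set.mapsTo_image _ _, ?_, Set.surjOn_image _ _⟩, ?_⟩
  · intro a ha c hc h
    simpa using hquad a ha a ha c hc a ha (by rw [h])
  · intro a ha b hb c hc d hd
    exact ⟨hquad a ha b hb c hc d hd, fun h => by rw [← map_add, ← map_add, h]⟩

theorem ZMod.two_span_singleton_eq_pair {V : Type*} [AddCommGroup V] [Module (ZMod 2) V]
    (x : V) : ((ZMod 2 ∙ x : Submodule (ZMod 2) V) : Set V) = {0, x} := by
  have hZ : ∀ a : ZMod 2, a = 0 ∨ a = 1 := by decide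
  ext y
  simp only [SetLike.mem_coe, Submodule.mem_span_singleton, Set.mem_insert_iff,
    Set.mem_singleton_iff]
  constructor
  · rintro ⟨a, rfl⟩
    rcases hZ a with rfl | rfl <;> simp
  · rintro (rfl | rfl)
    exacts [⟨0, zero_smul _ _⟩, ⟨1, one_smul _ _⟩]

theorem exists_linearMap_ker_eq_span_singleton {K : Type*} [Field K] {m : ℕ} {x : Fin m → K}
    (hx : x ≠ 0) :
    ∃ φ : (Fin m → K) →ₗ[K] (Fin (m - 1) → K), LinearMap.ker φ = K ∙ x := by
  have hrank : Module.finrank K ((Fin m → K) ⧸ K ∙ x) = Module.finrank K (Fin (m - 1) → K) := by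
    have := (K ∙ x).finrank_quotient_add_finrank
    rw [finrank_span_singleton hx, Module.finrank_fin_fun] at this
    rw [Module.finrank_fin_fun]
    omega
  obtain ⟨e⟩ := FiniteDimensional.nonempty_linearEquiv_of_finrank_eq hrank
  refine ⟨e.toLinearMap ∘ₗ (K ∙ x).mkQ, ?_⟩
  rw [LinearMap.ker_comp, e.ker, Submodule.comap_bot, Submodule.ker_mkQ]

theorem Finset.card_add_add_sub_sub_le {G : Type*} [AddCommGroup G] [DecidableEq G]
    {A : Finset G} (hA : A.Nonempty) {K : ℝ} (hK : (#(A + A) : ℝ) ≤ K * #A) :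
    (#(A + A - A - A) : ℝ) ≤ K ^ 4 * #A := by
  have hA₀ : (0 : ℝ) < #A := by exact_mod_cast hA.card_pos
  have hdoubling : (#(A + A) : ℝ) / #A ≤ K := (div_le_iff₀ hA₀).2 hK
  have hplu := NNRat.cast_le (K := ℝ) |>.2 <|
    pluennecke_ruzsa_inequality_nsmul_sub_nsmul_add hA A 2 2
  rw [two_nsmul, ← sub_sub] at hplu
  push_cast at hplu
  calc (#(A + A - A - A) : ℝ)
      ≤ ((#(A + A) : ℝ) / #A) ^ 4 * #A := hplu
    _ ≤ K ^ 4 * #A := by gcongr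

/-- If `A ⊆ 𝔽₂^m` has doubling `K` and `m` is minimal such that `A` is Freiman
2-isomorphic to a subset of `𝔽₂^m`, then: any linear map `φ : 𝔽₂^m → 𝔽₂^{m-1}` whose
kernel is `{0, x}` with `x ∉ 2A - 2A` induces a Freiman 2-isomorphism on `A`;
consequently `2A - 2A = 𝔽₂^m` and `2^m > K⁴|A|` is impossible. -/
theorem stmt15 (m : ℕ) (A : Finset (Fin m → ZMod 2)) (hA : A.Nonempty) (K : ℝ)
    (hK : ((A + A).card : ℝ) ≤ K * A.card)
    (hmin : ∀ m' < m, ¬ ∃ (A' : Set (Fin m' → ZMod 2))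
      (φ : (Fin m → ZMod 2) → (Fin m' → ZMod 2)),
        IsAddFreimanIso 2 (A : Set (Fin m → ZMod 2)) A' φ) :
    (∀ x : Fin m → ZMod 2, x ∉ A + A - A - A →
      ∀ φ : (Fin m → ZMod 2) →ₗ[ZMod 2] (Fin (m - 1) → ZMod 2),
        (LinearMap.ker φ : Set (Fin m → ZMod 2)) = {0, x} →
        IsAddFreimanIso 2 (A : Set (Fin m → ZMod 2)) (φ '' A) φ) ∧
    (A + A - A - A = (Finset.univ : Finset (Fin m → ZMod 2))) ∧
    ¬ (K ^ 4 * A.card < (2 : ℝ) ^ m) := by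
  have hiso : ∀ x : Fin m → ZMod 2, x ∉ A + A - A - A →
      ∀ φ : (Fin m → ZMod 2) →ₗ[ZMod 2] (Fin (m - 1) → ZMod 2),
        (LinearMap.ker φ : Set (Fin m → ZMod 2)) = {0, x} →
        IsAddFreimanIso 2 (A : Set (Fin m → ZMod 2)) (φ '' A) φ := by
    intro x hx φ hker
    refine isAddFreimanIso_two_image_of_map_eq_zero φ fun y hy hφy => ?_
    obtain rfl | rfl : y ∈ ({0, x} : Set (Fin m → ZMod 2)) := hker ▸ hφy
    · rfl
    · exact absurd (by exact_mod_cast hy) hx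
  have hfull : A + A - A - A = univ := by
    refine eq_univ_of_forall fun x => by_contra fun hx => ?_
    obtain ⟨a, ha⟩ := hA
    have hx₀ : x ≠ 0 := by
      rintro rfl
      exact hx (by simpa using sub_mem_sub (sub_mem_sub (add_mem_add ha ha) ha) ha)
    have hm : m - 1 < m := Nat.sub_one_lt fun h => hx₀ (by subst h; exact Subsingleton.elim _ _)
    obtain ⟨φ, hφ⟩ := exists_linearMap_ker_eq_span_singleton hx₀
    exact hmin (m - 1) hm
      ⟨_, φ, hiso x hx φ (by rw [hφ, ZMod.two_span_singleton_eq_pair])⟩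
  refine ⟨hiso, hfull, fun hlt => ?_⟩
  have hcard := card_add_add_sub_sub_le hA hK
  rw [hfull, card_univ, Fintype.card_fun, ZMod.card, Fintype.card_fin] at hcard
  push_cast at hcard
  linarith
end
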